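/- Suppose β(J + K) ≥ log ν + a + log((1+a)/a) for reals β, J, K, a > 0 and ν ≥ 1, and suppose 2ν⁵ e^{−5(β(J+K)−a)} ≤ 1. Define μ(n) = e^{−(β(J+K)−a)n} for n ∈ ℕ. Then for every n ≥ 6, e^{−β(J+K)n} ≤ (e^{μ(n)} − 1)·exp(−(2n)·Σ_{m=6}^∞ ν^m μ(m)). -/
import Mathlib


theorem kp_condition (β J K a ν : ℝ) (hβ : 0 < β) (ha : 0 < a) (hν : 1 ≤ ν)
    (h : β * (J + K) ≥ Real.log ν + a + Real.log ((1 + a) / a))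
    (hcond : 2 * ν ^ 5 * Real.exp (-5 * (β * (J + K) - a)) ≤ 1) :
    ∀ n : ℕ, 6 ≤ n →
      Real.exp (-β * (J + K) * n) ≤
        (Real.exp (Real.exp (-(β * (J + K) - a) * n)) - 1) *
          Real.exp (-(2 * n) *
            ∑' m : ℕ, ν ^ (m + 6) * Real.exp (-(β * (J + K) - a) * (m + 6))) := by
  intro n hn
  have hν0 : (0:ℝ) < ν := lt_of_lt_of_le one_pos hν
  have ha1 : (0:ℝ) < 1 + a := by linarith
  set b : ℝ := β * (J + K) - a with hb
  set q : ℝ := ν * Real.exp (-b) with hq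
  have hqpos : 0 < q := mul_pos hν0 (Real.exp_pos _)
  -- bound on q
  have hbge : Real.log (ν * ((1 + a) / a)) ≤ b := by
    rw [Real.log_mul (ne_of_gt hν0) (by positivity)]
    simp only [hb]; linarith [h]
  have hexpb : ν * ((1 + a) / a) ≤ Real.exp b := by
    have := Real.exp_le_exp.mpr hbge
    rwa [Real.exp_log (by positivity)] at this
  have hqa : q * ((1 + a) / a) ≤ 1 := by
    have h2 := mul_le_mul_of_nonneg_left hexpb (le_of_lt (Real.exp_pos (-b)))
    calc q * ((1 + a) / a) = Real.exp (-b) * (ν * ((1 + a) / a)) := by ring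
      _ ≤ Real.exp (-b) * Real.exp b := h2
      _ = 1 := by rw [← Real.exp_add]; simp
  have hqle : q * (1 + a) ≤ a := by
    have := mul_le_mul_of_nonneg_right hqa (le_of_lt ha)
    have hne : a ≠ 0 := ne_of_gt ha
    field_simp at this
    linarith
  have hq1 : q < 1 := by nlinarith
  -- q^5 ≤ 1/2
  have hq5 : q ^ 5 ≤ 1 / 2 := by
    have hpow : q ^ 5 = ν ^ 5 * Real.exp (-5 * b) := by
      rw [hq, mul_pow, ← Real.exp_nat_mul]
      norm_num
    rw [hpow]; linarith
  -- compute the sum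
  have hterm : ∀ m : ℕ, ν ^ (m + 6) * Real.exp (-b * (↑m + 6)) = q ^ (m + 6) := by
    intro m
    rw [hq, mul_pow, ← Real.exp_nat_mul]
    push_cast
    ring_nf
  have hsum : (∑' m : ℕ, ν ^ (m + 6) * Real.exp (-b * (↑m + 6)))
      = q ^ 6 * (1 - q)⁻¹ := by
    have h1 : (∑' m : ℕ, ν ^ (m + 6) * Real.exp (-b * (↑m + 6)))
        = ∑' m : ℕ, q ^ 6 * q ^ m := by
      apply tsum_congr
      intro m
      rw [hterm m, pow_add, mul_comm]
    rw [h1, tsum_mul_left, tsum_geometric_of_lt_one (le_of_lt hqpos) hq1]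
  have hinv : (1 - q)⁻¹ ≤ 1 + a := by
    have h1 : 1 / (1 + a) ≤ 1 - q := by
      rw [div_le_iff₀ ha1]; nlinarith
    have h2 := inv_anti₀ (by positivity : (0:ℝ) < 1 / (1 + a)) h1
    rwa [one_div, inv_inv] at h2
  have hS : (∑' m : ℕ, ν ^ (m + 6) * Real.exp (-b * (↑m + 6))) ≤ a / 2 := by
    rw [hsum]
    have h1q : 0 < 1 - q := by linarith
    calc q ^ 6 * (1 - q)⁻¹ ≤ q ^ 6 * (1 + a) := by
          apply mul_le_mul_of_nonneg_left hinv (by positivity)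
      _ = q ^ 5 * (q * (1 + a)) := by ring
      _ ≤ (1 / 2) * a := by
          apply mul_le_mul hq5 hqle (by nlinarith) (by norm_num)
      _ = a / 2 := by ring
  set S : ℝ := ∑' m : ℕ, ν ^ (m + 6) * Real.exp (-b * (↑m + 6)) with hSdef
  have hn6 : (6:ℝ) ≤ (n:ℝ) := by exact_mod_cast hn
  have hx : Real.exp (-b * ↑n) ≤ Real.exp (Real.exp (-b * ↑n)) - 1 := by
    linarith [Real.add_one_le_exp (Real.exp (-b * ↑n))]
  calc Real.exp (-β * (J + K) * ↑n)
      ≤ Real.exp (-b * ↑n + -(2 * ↑n) * S) := by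
        apply Real.exp_le_exp.mpr
        have hS0 : S ≤ a / 2 := hS
        nlinarith
    _ = Real.exp (-b * ↑n) * Real.exp (-(2 * ↑n) * S) := by rw [Real.exp_add]
    _ ≤ (Real.exp (Real.exp (-b * ↑n)) - 1) * Real.exp (-(2 * ↑n) * S) :=
        mul_le_mul_of_nonneg_right hx (le_of_lt (Real.exp_pos _))
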